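/- arXiv:1803.10904 — 6 statements merged into one kernel-verified Lean document; each statement's English description precedes it below -/
import Mathlib

section
/- Let R > 1 and r = 1/R. Let f : ℂ → ℂ be continuous on the closed annulus {z : r ≤ |z| ≤ R}, complex-differentiable on the open annulus, and satisfy |f(z)| ≤ 1 there. Define g(z) := (1/(2πi)) [ ∮_{|σ|=R} conj(f(σ))/(σ − z) dσ − ∮_{|σ|=r} conj(f(σ))/(σ − z) dσ ] for z in the open annulus. Then, as z → r along the reals from within the annulus (z = ρ with r < ρ), lim conj(g(z)) = (1/(2π)) ∫₀^{2π} f(R e^{iθ}) · (R⁴ − 1)/(R⁴ − 2R² cos θ + 1) dθ; that is, extending g continuously to z = r, conj(g(r)) equals this integral. -/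
open scoped Real
open Complex MeasureTheory Metric Set Filter

private lemma conj_intervalIntegral (f : ℝ → ℂ) (a b : ℝ) :
    (starRingEnd ℂ) (∫ x in a..b, f x) = ∫ x in a..b, (starRingEnd ℂ) (f x) := by
  rw [intervalIntegral.intervalIntegral_eq_integral_uIoc,
      intervalIntegral.intervalIntegral_eq_integral_uIoc]
  split_ifs <;> simp [integral_conj, Complex.real_smul, Complex.conj_ofReal]

private lemma kernel_value (R : ℝ) (hR : 1 < R) (θ : ℝ) :
    circleMap 0 R θ *
        ((circleMap 0 R θ - (((1/R : ℝ)) : ℂ))⁻¹ - (circleMap 0 R θ - ((R^3 : ℝ) : ℂ))⁻¹) =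
      (((R ^ 4 - 1) / (R ^ 4 - 2 * R ^ 2 * Real.cos θ + 1) : ℝ) : ℂ) := by
  have hR0 : (0:ℝ) < R := one_pos.trans hR
  have hRC : (R:ℂ) ≠ 0 := by exact_mod_cast hR0.ne'
  set e : ℂ := Complex.exp (θ * Complex.I) with he
  have he0 : e ≠ 0 := Complex.exp_ne_zero _
  have habs : ‖e‖ = 1 := Complex.norm_exp_ofReal_mul_I θ
  have hσ : circleMap 0 R θ = (R:ℂ) * e := circleMap_zero R θ
  have hcos : Complex.cos (θ:ℂ) = (e + e⁻¹) / 2 := by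
    rw [Complex.cos, show -(θ:ℂ) * Complex.I = -((θ:ℂ) * Complex.I) by ring,
      Complex.exp_neg]
    try ring
  have h1 : (R:ℂ) * e - 1/(R:ℂ) ≠ 0 := by
    rw [sub_ne_zero]
    intro h
    have h' := congrArg (‖·‖) h
    simp [habs, abs_of_pos hR0] at h'
    field_simp at h'
    nlinarith
  have h1' : (R:ℂ)^2 * e - 1 ≠ 0 := by
    rw [sub_ne_zero]
    intro h
    have h' := congrArg (‖·‖) h
    simp [habs, abs_of_pos hR0, abs_of_pos (by positivity : (0:ℝ) < R^2)] at h'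
    rcases h' with h' | h' <;> nlinarith
  have h2 : (R:ℂ) * e - (R:ℂ)^3 ≠ 0 := by
    rw [sub_ne_zero]
    intro h
    have h' := congrArg (‖·‖) h
    simp [habs, abs_of_pos hR0, abs_of_pos (by positivity : (0:ℝ) < R^3)] at h'
    nlinarith [mul_pos (mul_pos hR0 (sub_pos.mpr hR)) (by linarith : (0:ℝ) < R + 1)]
  have hR2 : 1 < R^2 := by nlinarith
  have h3 : (0:ℝ) < R ^ 4 - 2 * R ^ 2 * Real.cos θ + 1 := by
    nlinarith [mul_nonneg (sq_nonneg R) (sub_nonneg.mpr (Real.cos_le_one θ)),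
      mul_pos (sub_pos.mpr hR2) (sub_pos.mpr hR2)]
  have key : ((R ^ 4 - 2 * R ^ 2 * Real.cos θ + 1 : ℝ) : ℂ) =
      (R:ℂ)^4 - 2*(R:ℂ)^2*Complex.cos (θ:ℂ) + 1 := by push_cast; ring
  have h4 : (R:ℂ)^4 - 2*(R:ℂ)^2*Complex.cos (θ:ℂ) + 1 ≠ 0 := by
    rw [← key]; exact_mod_cast h3.ne'
  rw [hσ]
  push_cast
  have hden : ((R:ℂ)*e - 1/(R:ℂ)) * ((R:ℂ)*e - (R:ℂ)^3) =
      -e * ((R:ℂ)^4 - 2*(R:ℂ)^2*Complex.cos (θ:ℂ) + 1) := by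
    rw [hcos]
    field_simp
    ring
  have hsub : ((R:ℂ)*e - 1/(R:ℂ))⁻¹ - ((R:ℂ)*e - (R:ℂ)^3)⁻¹ =
      (1/(R:ℂ) - (R:ℂ)^3) / (-e * ((R:ℂ)^4 - 2*(R:ℂ)^2*Complex.cos (θ:ℂ) + 1)) := by
    rw [inv_sub_inv h1 h2, ← hden]
    congr 1
    ring
  rw [hsub, eq_div_iff h4]
  have hne : -e * ((R:ℂ)^4 - 2*(R:ℂ)^2*Complex.cos (θ:ℂ) + 1) ≠ 0 :=
    mul_ne_zero (neg_ne_zero.mpr he0) h4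
  field_simp [hne]
  have hD : (R:ℂ)^2*((R:ℂ)^2 - 2*Complex.cos (θ:ℂ))+1 ≠ 0 := by
    convert h4 using 1; ring
  rw [mul_div_assoc, div_self hD]
  ring

/-- Conjugate of the Cauchy-type circle integral with real pole `ρ`. -/
private lemma conj_circle_transform (f : ℂ → ℂ) {s ρ : ℝ} (hs : 0 < s) (hρ0 : 0 < ρ)
    (hρs : ρ ≠ s) :
    (starRingEnd ℂ) (∮ σ in C(0, s), (starRingEnd ℂ) (f σ) / (σ - (ρ:ℂ))) =
      ∮ σ in C(0, s), ((s:ℂ)^2 / (σ * ((ρ:ℂ) * σ - (s:ℂ)^2))) * f σ := by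
  rw [circleIntegral, circleIntegral, conj_intervalIntegral]
  refine intervalIntegral.integral_congr fun θ _ => ?_
  have hσ0 : circleMap 0 s θ ≠ 0 := circleMap_ne_center hs.ne'
  set σ := circleMap 0 s θ with hσ
  have hσabs : ‖σ‖ = s := by rw [hσ, norm_circleMap_zero, abs_of_pos hs]
  have hnsq : σ * (starRingEnd ℂ) σ = ((s:ℂ))^2 := by
    rw [mul_comm, Complex.conj_mul', hσabs]
  have hconj : (starRingEnd ℂ) σ = (s:ℂ)^2 / σ := by
    rw [eq_div_iff hσ0, mul_comm, hnsq]
  have h1 : σ ≠ (ρ:ℂ) := by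
    intro h
    have := congrArg (‖·‖) h
    rw [hσabs, Complex.norm_real, Real.norm_eq_abs, abs_of_pos hρ0] at this
    exact hρs this.symm
  have h2 : (ρ:ℂ) * σ - (s:ℂ)^2 ≠ 0 := by
    rw [sub_ne_zero]
    intro h
    have := congrArg (‖·‖) h
    rw [norm_mul, Complex.norm_real, Real.norm_eq_abs, abs_of_pos hρ0, hσabs, norm_pow, Complex.norm_real, Real.norm_eq_abs,
      abs_of_pos hs] at this
    exact hρs (by nlinarith)
  have h3 : (s:ℂ)^2 / σ - (ρ:ℂ) ≠ 0 := by
    rw [div_sub' hσ0]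
    apply div_ne_zero _ hσ0
    intro h
    apply h2
    rw [sub_eq_zero] at h ⊢
    linear_combination -h
  have hd : (s:ℂ)^2 * σ - σ^2 * (ρ:ℂ) ≠ 0 := by
    intro h
    exact mul_ne_zero hσ0 h2 (by linear_combination -h)
  have h2' : (s:ℂ)^2 - (ρ:ℂ)*σ ≠ 0 := by
    intro h; exact h2 (by linear_combination -h)
  rw [deriv_circleMap, ← hσ]
  simp only [smul_eq_mul, map_mul, map_div₀, Complex.conj_I, map_sub, Complex.conj_ofReal,
    Complex.conj_conj, hconj]
  rw [div_sub' hσ0, div_div_eq_mul_div]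
  field_simp [h2']
  rw [← div_neg, neg_sub]

/-- Partial fractions on the circle of radius `s`. -/
private lemma kernel_split (f : ℂ → ℂ) {s ρ : ℝ} (hs : 0 < s) (hρ0 : 0 < ρ) (hρs : ρ ≠ s) :
    (∮ σ in C(0, s), ((s:ℂ)^2 / (σ * ((ρ:ℂ) * σ - (s:ℂ)^2))) * f σ) =
      ∮ σ in C(0, s), (-σ⁻¹ + (σ - ((s^2/ρ : ℝ) : ℂ))⁻¹) * f σ := by
  refine circleIntegral.integral_congr hs.le fun σ hσ => ?_
  have hσabs : ‖σ‖ = s := by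
    rw [mem_sphere_zero_iff_norm] at hσ; exact hσ
  have hσ0 : σ ≠ 0 := by
    intro h; rw [h] at hσabs; simp at hσabs; exact hs.ne' hσabs.symm
  have h2 : (ρ:ℂ) * σ - (s:ℂ)^2 ≠ 0 := by
    rw [sub_ne_zero]
    intro h
    have := congrArg (‖·‖) h
    rw [norm_mul, Complex.norm_real, Real.norm_eq_abs, abs_of_pos hρ0, hσabs, norm_pow, Complex.norm_real, Real.norm_eq_abs,
      abs_of_pos hs] at this
    exact hρs (by nlinarith)
  have hρC : (ρ:ℂ) ≠ 0 := by exact_mod_cast hρ0.ne'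
  have h4 : σ - ((s^2/ρ : ℝ) : ℂ) ≠ 0 := by
    rw [sub_ne_zero]
    intro h
    apply h2
    rw [h]
    push_cast
    field_simp
    ring
  have h2'' : σ * (ρ:ℂ) - (s:ℂ)^2 ≠ 0 := by
    intro h; exact h2 (by linear_combination h)
  congr 1
  push_cast at h4 ⊢
  rw [sub_div' hρC, inv_div]
  field_simp [hσ0, h2'']
  ring

private lemma annulus_closed_eq (R : ℝ) :
    closedBall (0:ℂ) R \ ball (0:ℂ) (1/R) =
      {z : ℂ | 1/R ≤ ‖z‖ ∧ ‖z‖ ≤ R} := by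
  ext z
  simp only [mem_diff, mem_closedBall_zero_iff, mem_ball_zero_iff,
    not_lt, mem_setOf_eq]
  tauto

private lemma annulus_open_eq (R : ℝ) :
    ball (0:ℂ) R \ closedBall (0:ℂ) (1/R) =
      {z : ℂ | 1/R < ‖z‖ ∧ ‖z‖ < R} := by
  ext z
  simp only [mem_diff, mem_closedBall_zero_iff, mem_ball_zero_iff,
    not_le, mem_setOf_eq]
  tauto

private lemma annulus_cauchy (R : ℝ) (hR : 1 < R) (h : ℂ → ℂ)
    (hc : ContinuousOn h {z : ℂ | 1/R ≤ ‖z‖ ∧ ‖z‖ ≤ R})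
    (hd : ∀ z ∈ {z : ℂ | 1/R < ‖z‖ ∧ ‖z‖ < R}, DifferentiableAt ℂ h z) :
    (∮ z in C(0, R), h z) = ∮ z in C(0, 1/R), h z := by
  have hR0 : (0:ℝ) < R := one_pos.trans hR
  have h1R : (0:ℝ) < 1/R := by positivity
  have hle : 1/R ≤ R := le_of_lt (lt_trans ((div_lt_one hR0).mpr hR) hR)
  refine Complex.circleIntegral_eq_of_differentiable_on_annulus_off_countable h1R hle
    Set.countable_empty ?_ ?_
  · rw [annulus_closed_eq]; exact hc
  · intro z hz
    rw [diff_empty, annulus_open_eq] at hz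
    exact hd z hz

private lemma cauchy_move (R : ℝ) (hR : 1 < R) (f : ℂ → ℂ)
    (hfc : ContinuousOn f {z : ℂ | 1/R ≤ ‖z‖ ∧ ‖z‖ ≤ R})
    (hfd : ∀ z ∈ {z : ℂ | 1/R < ‖z‖ ∧ ‖z‖ < R}, DifferentiableAt ℂ f z)
    (c : ℂ) (hc : ‖c‖ < 1/R) :
    (∮ σ in C(0, R), (-σ⁻¹ + (σ - c)⁻¹) * f σ) =
      ∮ σ in C(0, 1/R), (-σ⁻¹ + (σ - c)⁻¹) * f σ := by
  have h1R : (0:ℝ) < 1/R := by positivity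
  apply annulus_cauchy R hR
  · refine ContinuousOn.mul (ContinuousOn.add (ContinuousOn.neg ?_) ?_) hfc
    · refine ContinuousOn.inv₀ continuousOn_id fun z hz => ?_
      intro h
      rw [h] at hz
      simp only [mem_setOf_eq, norm_zero] at hz
      linarith [hz.1]
    · refine ContinuousOn.inv₀ (continuousOn_id.sub continuousOn_const) fun z hz => ?_
      rw [sub_ne_zero]
      intro h
      rw [← h] at hc
      linarith [hz.1, hc]
  · intro z hz
    have hz0 : z ≠ 0 := by
      intro h
      rw [h] at hz
      simp only [mem_setOf_eq, norm_zero] at hz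
      linarith [hz.1]
    have hzc : z - c ≠ 0 := by
      rw [sub_ne_zero]
      intro h
      rw [← h] at hc
      linarith [hz.1, hc]
    exact (((differentiableAt_id.inv hz0).neg.add
      ((differentiableAt_id.sub_const c).inv hzc)).mul (hfd z hz))

private lemma circleInt (R : ℝ) (hR : 1 < R) (f : ℂ → ℂ)
    (hfc : ContinuousOn f {z : ℂ | 1/R ≤ ‖z‖ ∧ ‖z‖ ≤ R})
    (c : ℂ) (hc : ‖c‖ ≠ R) :
    CircleIntegrable (fun σ => (-σ⁻¹ + (σ - c)⁻¹) * f σ) 0 R := by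
  have hR0 : (0:ℝ) < R := one_pos.trans hR
  apply ContinuousOn.circleIntegrable hR0.le
  have hsub : (sphere (0:ℂ) R : Set ℂ) ⊆ {z : ℂ | 1/R ≤ ‖z‖ ∧ ‖z‖ ≤ R} := by
    intro z hz
    rw [mem_sphere_zero_iff_norm] at hz
    rw [mem_setOf_eq, hz]
    exact ⟨le_of_lt (lt_trans ((div_lt_one hR0).mpr hR) hR), le_refl R⟩
  refine ContinuousOn.mul (ContinuousOn.add (ContinuousOn.neg ?_) ?_) (hfc.mono hsub)
  · refine ContinuousOn.inv₀ continuousOn_id fun z hz => ?_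
    rw [mem_sphere_zero_iff_norm] at hz
    intro h
    rw [h] at hz
    simp at hz
    exact hR0.ne hz
  · refine ContinuousOn.inv₀ (continuousOn_id.sub continuousOn_const) fun z hz => ?_
    rw [mem_sphere_zero_iff_norm] at hz
    rw [sub_ne_zero]
    intro h
    rw [h] at hz
    exact hc hz

/-- **key step of Lemma 8.** Let `R > 1`, `r = 1/R`, `f` continuous on the
closed annulus, holomorphic and bounded by `1` on the open annulus, and `g` the Cauchy
transform of `conj ∘ f`.  Then the boundary value of `conj (g z)` as `z → r` from the right
along the reals equals
`(1/(2π)) ∫₀^{2π} f(R e^{iθ}) (R⁴ − 1)/(R⁴ − 2R² cos θ + 1) dθ`. -/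
theorem cauchy_transform_boundary_value_at_inner_point
    (R : ℝ) (hR : 1 < R)
    (f : ℂ → ℂ)
    (hfc : ContinuousOn f {z : ℂ | 1 / R ≤ ‖z‖ ∧ ‖z‖ ≤ R})
    (hfd : ∀ z ∈ {z : ℂ | 1 / R < ‖z‖ ∧ ‖z‖ < R}, DifferentiableAt ℂ f z)
    (hfb : ∀ z : ℂ, 1 / R ≤ ‖z‖ → ‖z‖ ≤ R → ‖f z‖ ≤ 1)
    (g : ℂ → ℂ)
    (hg : ∀ z : ℂ, 1 / R < ‖z‖ → ‖z‖ < R →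
      g z = (2 * (Real.pi : ℂ) * Complex.I)⁻¹ *
        ((∮ σ in C(0, R), starRingEnd ℂ (f σ) / (σ - z)) -
          ∮ σ in C(0, 1 / R), starRingEnd ℂ (f σ) / (σ - z))) :
    Filter.Tendsto (fun ρ : ℝ => starRingEnd ℂ (g ρ))
      (nhdsWithin (1 / R) (Set.Ioo (1 / R) R))
      (nhds ((1 / (2 * Real.pi) : ℝ) •
        ∫ θ in (0:ℝ)..(2 * Real.pi),
          (((R ^ 4 - 1) / (R ^ 4 - 2 * R ^ 2 * Real.cos θ + 1) : ℝ) •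
            f (R * Complex.exp (θ * Complex.I))))) := by
  have hR0 : (0:ℝ) < R := one_pos.trans hR
  have hr0 : (0:ℝ) < 1/R := by positivity
  have hr1 : 1/R < 1 := (div_lt_one hR0).mpr hR
  have hrR : 1/R < R := hr1.trans hR
  set P : ℝ → ℝ → ℂ := fun ρ θ =>
    circleMap 0 R θ *
      ((circleMap 0 R θ - (((1/R)^2/ρ : ℝ) : ℂ))⁻¹ - (circleMap 0 R θ - ((R^2/ρ : ℝ) : ℂ))⁻¹) *
      f (circleMap 0 R θ) with hPdef
  have hsphere : ∀ θ : ℝ, 1/R ≤ ‖circleMap 0 R θ‖ ∧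
      ‖circleMap 0 R θ‖ ≤ R := by
    intro θ
    rw [norm_circleMap_zero, abs_of_pos hR0]
    exact ⟨hrR.le, le_refl R⟩
  have hfcont : Continuous fun θ : ℝ => f (circleMap 0 R θ) :=
    hfc.comp_continuous (continuous_circleMap 0 R) fun θ => hsphere θ
  have hker : ∀ c : ℂ, ‖c‖ ≠ R → Continuous fun θ : ℝ => (circleMap 0 R θ - c)⁻¹ := by
    intro c hc
    refine Continuous.inv₀ ((continuous_circleMap 0 R).sub continuous_const) fun θ => ?_
    rw [sub_ne_zero]
    intro hq
    exact hc (by rw [← hq, norm_circleMap_zero, abs_of_pos hR0])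
  -- the key identity on the open annulus
  have key : ∀ ρ : ℝ, ρ ∈ Set.Ioo (1/R) R →
      (starRingEnd ℂ) (g ρ) = (2*(Real.pi:ℂ))⁻¹ * ∫ θ in (0:ℝ)..(2*Real.pi), P ρ θ := by
    rintro ρ ⟨hρ1, hρ2⟩
    have hρ0 : (0:ℝ) < ρ := hr0.trans hρ1
    have habsρ : ‖(ρ:ℂ)‖ = ρ := by
      rw [Complex.norm_real, Real.norm_eq_abs, abs_of_pos hρ0]
    rw [hg ρ (by rw [habsρ]; exact hρ1) (by rw [habsρ]; exact hρ2)]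
    rw [map_mul, map_sub]
    rw [conj_circle_transform f hR0 hρ0 (ne_of_lt hρ2),
        conj_circle_transform f hr0 hρ0 (ne_of_gt hρ1)]
    rw [kernel_split f hR0 hρ0 (ne_of_lt hρ2), kernel_split f hr0 hρ0 (ne_of_gt hρ1)]
    -- move the inner integral to the outer circle
    have hbval : ‖((((1/R)^2/ρ : ℝ)) : ℂ)‖ < 1/R := by
      rw [Complex.norm_real, Real.norm_eq_abs, abs_of_pos (by positivity)]
      rw [div_lt_iff₀ hρ0]
      nlinarith
    rw [← cauchy_move R hR f hfc hfd _ hbval]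
    -- subtract the two outer integrals
    have haInt : CircleIntegrable
        (fun σ => (-σ⁻¹ + (σ - ((R^2/ρ : ℝ) : ℂ))⁻¹) * f σ) 0 R := by
      refine circleInt R hR f hfc _ ?_
      rw [Complex.norm_real, Real.norm_eq_abs, abs_of_pos (by positivity)]
      intro h
      rw [div_eq_iff hρ0.ne'] at h
      nlinarith
    have hbInt : CircleIntegrable
        (fun σ => (-σ⁻¹ + (σ - (((1/R)^2/ρ : ℝ) : ℂ))⁻¹) * f σ) 0 R := by
      refine circleInt R hR f hfc _ ?_
      intro h
      rw [h] at hbval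
      linarith
    rw [← circleIntegral.integral_sub haInt hbInt]
    have hcongr : (∮ σ in C(0, R),
        ((-σ⁻¹ + (σ - ((R^2/ρ : ℝ) : ℂ))⁻¹) * f σ -
          (-σ⁻¹ + (σ - (((1/R)^2/ρ : ℝ) : ℂ))⁻¹) * f σ)) =
        ∮ σ in C(0, R), (((σ - ((R^2/ρ : ℝ) : ℂ))⁻¹ - (σ - (((1/R)^2/ρ : ℝ) : ℂ))⁻¹) * f σ) :=
      circleIntegral.integral_congr hR0.le fun σ _ => by ring
    rw [hcongr]
    -- to an interval integral
    have hIform : (∮ σ in C(0, R),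
        (((σ - ((R^2/ρ : ℝ) : ℂ))⁻¹ - (σ - (((1/R)^2/ρ : ℝ) : ℂ))⁻¹) * f σ)) =
        -Complex.I * ∫ θ in (0:ℝ)..(2*Real.pi), P ρ θ := by
      rw [circleIntegral, ← intervalIntegral.integral_const_mul]
      refine intervalIntegral.integral_congr fun θ _ => ?_
      rw [deriv_circleMap]
      simp only [smul_eq_mul, hPdef]
      ring
    rw [hIform]
    -- final constant algebra
    have hπ : (Real.pi : ℂ) ≠ 0 := Complex.ofReal_ne_zero.mpr Real.pi_ne_zero
    have hconjI : (starRingEnd ℂ) (2 * (Real.pi:ℂ) * Complex.I)⁻¹ =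
        -(2 * (Real.pi:ℂ) * Complex.I)⁻¹ := by
      rw [map_inv₀, map_mul, map_mul, Complex.conj_I, Complex.conj_ofReal, map_ofNat,
        mul_neg, inv_neg]
    rw [hconjI, mul_inv, Complex.inv_I]
    linear_combination (-((2*(Real.pi:ℂ))⁻¹ * (∫ θ in (0:ℝ)..(2*Real.pi), P ρ θ))) *
      Complex.I_sq
  -- eventual set
  have hev : Set.Ioo (1/R) (1:ℝ) ∈ nhdsWithin (1/R) (Set.Ioo (1/R) R) := by
    refine Filter.mem_of_superset
      (Filter.inter_mem self_mem_nhdsWithin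
        (mem_nhdsWithin_of_mem_nhds (Iio_mem_nhds hr1))) ?_
    rintro x ⟨hx1, hx2⟩
    exact ⟨hx1.1, hx2⟩
  -- dominated convergence
  have hT : Filter.Tendsto (fun ρ : ℝ => ∫ θ in (0:ℝ)..(2*Real.pi), P ρ θ)
      (nhdsWithin (1/R) (Set.Ioo (1/R) R))
      (nhds (∫ θ in (0:ℝ)..(2*Real.pi), P (1/R) θ)) := by
    refine intervalIntegral.tendsto_integral_filter_of_dominated_convergence
      (fun _ => R * ((R - 1/R)⁻¹ + (R^2 - R)⁻¹)) ?_ ?_ ?_ ?_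
    · filter_upwards [hev] with ρ hρ
      have hρ0' : (0:ℝ) < ρ := hr0.trans hρ.1
      have hb : ‖((((1/R)^2/ρ : ℝ)) : ℂ)‖ ≠ R := by
        rw [Complex.norm_real, Real.norm_eq_abs, abs_of_pos (div_pos (by positivity) hρ0')]
        intro h
        have : ((1/R)^2/ρ : ℝ) < 1/R := by
          rw [div_lt_iff₀ hρ0']
          nlinarith [hρ.1]
        linarith
      have ha : ‖(((R^2/ρ : ℝ)) : ℂ)‖ ≠ R := by
        rw [Complex.norm_real, Real.norm_eq_abs, abs_of_pos (div_pos (by positivity) hρ0')]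
        intro h
        rw [div_eq_iff hρ0'.ne'] at h
        nlinarith [hρ.2, hρ0']
      exact (((continuous_circleMap 0 R).mul
        ((hker _ hb).sub (hker _ ha))).mul hfcont).aestronglyMeasurable
    · filter_upwards [hev] with ρ hρ
      apply MeasureTheory.ae_of_all
      intro θ _
      have hρ0 : (0:ℝ) < ρ := hr0.trans hρ.1
      have hσnorm : ‖circleMap 0 R θ‖ = R := by
        rw [norm_circleMap_zero, abs_of_pos hR0]
      have hbnorm : ‖((((1/R)^2/ρ : ℝ)) : ℂ)‖ ≤ 1/R := by
        rw [Complex.norm_real, Real.norm_eq_abs, abs_of_pos (by positivity)]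
        rw [div_le_iff₀ hρ0]
        nlinarith [hρ.1]
      have hanorm : R^2 ≤ ‖(((R^2/ρ : ℝ)) : ℂ)‖ := by
        rw [Complex.norm_real, Real.norm_eq_abs, abs_of_pos (by positivity)]
        rw [le_div_iff₀ hρ0]
        nlinarith [hρ.2]
      have h1 : ‖(circleMap 0 R θ - (((1/R)^2/ρ : ℝ) : ℂ))⁻¹‖ ≤ (R - 1/R)⁻¹ := by
        rw [norm_inv]
        refine inv_anti₀ (by linarith) ?_
        calc R - 1/R ≤ ‖circleMap 0 R θ‖ - ‖((((1/R)^2/ρ : ℝ)) : ℂ)‖ := by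
              rw [hσnorm]; linarith
          _ ≤ ‖circleMap 0 R θ - (((1/R)^2/ρ : ℝ) : ℂ)‖ := norm_sub_norm_le _ _
      have h2 : ‖(circleMap 0 R θ - ((R^2/ρ : ℝ) : ℂ))⁻¹‖ ≤ (R^2 - R)⁻¹ := by
        rw [norm_inv]
        refine inv_anti₀ (by nlinarith) ?_
        calc R^2 - R ≤ ‖(((R^2/ρ : ℝ)) : ℂ)‖ - ‖circleMap 0 R θ‖ := by
              rw [hσnorm]; linarith
          _ ≤ ‖(((R^2/ρ : ℝ)) : ℂ) - circleMap 0 R θ‖ := norm_sub_norm_le _ _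
          _ = ‖circleMap 0 R θ - ((R^2/ρ : ℝ) : ℂ)‖ := norm_sub_rev _ _
      have hf1 : ‖f (circleMap 0 R θ)‖ ≤ 1 := by
        exact hfb _ (hsphere θ).1 (hsphere θ).2
      have hd : ‖(circleMap 0 R θ - (((1/R)^2/ρ : ℝ) : ℂ))⁻¹ -
          (circleMap 0 R θ - ((R^2/ρ : ℝ) : ℂ))⁻¹‖ ≤ (R - 1/R)⁻¹ + (R^2 - R)⁻¹ :=
        le_trans (norm_sub_le _ _) (add_le_add h1 h2)
      calc ‖P ρ θ‖ = ‖circleMap 0 R θ‖ *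
            ‖(circleMap 0 R θ - (((1/R)^2/ρ : ℝ) : ℂ))⁻¹ -
              (circleMap 0 R θ - ((R^2/ρ : ℝ) : ℂ))⁻¹‖ * ‖f (circleMap 0 R θ)‖ := by
            rw [hPdef]; simp [norm_mul]
        _ ≤ R * ((R - 1/R)⁻¹ + (R^2 - R)⁻¹) * 1 := by
            refine mul_le_mul ?_ hf1 (norm_nonneg _)
              (mul_nonneg hR0.le (add_nonneg (inv_nonneg.mpr (by linarith))
                (inv_nonneg.mpr (by nlinarith))))
            rw [hσnorm]
            exact mul_le_mul_of_nonneg_left hd hR0.le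
        _ = R * ((R - 1/R)⁻¹ + (R^2 - R)⁻¹) := mul_one _
    · exact intervalIntegrable_const
    · apply MeasureTheory.ae_of_all
      intro θ _
      apply Filter.Tendsto.mono_left _ nhdsWithin_le_nhds
      have e1 : ((1/R)^2/(1/R) : ℝ) = (1/R : ℝ) := by
        rw [sq, mul_div_assoc, div_self hr0.ne', mul_one]
      have e2 : (R^2/(1/R) : ℝ) = (R^3 : ℝ) := by
        field_simp
      have hne1 : circleMap 0 R θ - (((1/R)^2/(1/R) : ℝ) : ℂ) ≠ 0 := by
        rw [e1, sub_ne_zero]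
        intro h
        have h' := congrArg (‖·‖) h
        rw [norm_circleMap_zero, abs_of_pos hR0, Complex.norm_real, Real.norm_eq_abs, abs_of_pos hr0] at h'
        linarith [hrR]
      have hne2 : circleMap 0 R θ - ((R^2/(1/R) : ℝ) : ℂ) ≠ 0 := by
        rw [e2, sub_ne_zero]
        intro h
        have h' := congrArg (‖·‖) h
        rw [norm_circleMap_zero, abs_of_pos hR0, Complex.norm_real, Real.norm_eq_abs,
          abs_of_pos (by positivity : (0:ℝ) < R^3)] at h'
        nlinarith
      have hc1 : ContinuousAt (fun ρ : ℝ =>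
          (circleMap 0 R θ - (((1/R)^2/ρ : ℝ) : ℂ))⁻¹) (1/R) :=
        ContinuousAt.inv₀
          (continuousAt_const.sub (Complex.continuous_ofReal.continuousAt.comp
            (continuousAt_const.div continuousAt_id hr0.ne'))) hne1
      have hc2 : ContinuousAt (fun ρ : ℝ =>
          (circleMap 0 R θ - ((R^2/ρ : ℝ) : ℂ))⁻¹) (1/R) :=
        ContinuousAt.inv₀
          (continuousAt_const.sub (Complex.continuous_ofReal.continuousAt.comp
            (continuousAt_const.div continuousAt_id hr0.ne'))) hne2
      exact (continuousAt_const.mul (hc1.sub hc2)).mul continuousAt_const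
  -- identification of the limit value
  have hval : (2*(Real.pi:ℂ))⁻¹ * ∫ θ in (0:ℝ)..(2*Real.pi), P (1/R) θ =
      (1 / (2 * Real.pi) : ℝ) • ∫ θ in (0:ℝ)..(2 * Real.pi),
        (((R ^ 4 - 1) / (R ^ 4 - 2 * R ^ 2 * Real.cos θ + 1) : ℝ) •
          f (R * Complex.exp (θ * Complex.I))) := by
    have hint : ∫ θ in (0:ℝ)..(2*Real.pi), P (1/R) θ = ∫ θ in (0:ℝ)..(2 * Real.pi),
        (((R ^ 4 - 1) / (R ^ 4 - 2 * R ^ 2 * Real.cos θ + 1) : ℝ) •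
          f (R * Complex.exp (θ * Complex.I))) := by
      refine intervalIntegral.integral_congr fun θ _ => ?_
      have e1 : (((1/R)^2/(1/R) : ℝ) : ℂ) = (((1/R) : ℝ) : ℂ) := by
        norm_cast
        rw [sq, mul_div_assoc, div_self hr0.ne', mul_one]
      have e2 : ((R^2/(1/R) : ℝ) : ℂ) = ((R^3 : ℝ) : ℂ) := by
        norm_cast
        field_simp
      rw [hPdef]
      simp only [e1, e2]
      rw [kernel_value R hR θ, circleMap_zero, Complex.real_smul]
    rw [hint, Complex.real_smul]
    congr 1
    push_cast
    rw [one_div]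
  have hTc := hT.const_mul ((2*(Real.pi:ℂ))⁻¹)
  rw [hval] at hTc
  refine Filter.Tendsto.congr' ?_ hTc
  filter_upwards [self_mem_nhdsWithin] with ρ hρ
  exact (key ρ hρ).symm
end

section
/- Let A be a bounded linear operator on a complex Hilbert space H, let σ₀ ∈ ℂ be such that σ₀I − A is invertible, and let τ ∈ ℂ with |τ| = 1. Assume that the numerical range of A lies in the half-plane Π₀ = {z ∈ ℂ : Im(τ (conj(σ₀) − conj(z))) ≥ 0}, i.e. Im(τ(conj(σ₀) − conj(⟨Au, u⟩))) ≥ 0 for every unit vector u ∈ H. Then the self-adjoint operator μ(σ₀, τ; A) := (1/(2πi)) ( τ (σ₀I − A)⁻¹ − conj(τ) (conj(σ₀)I − A*)⁻¹ ) is positive semidefinite: Re⟨μ(σ₀, τ; A) v, v⟩ ≥ 0 for every v ∈ H. -/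
/-!
Put `R = (σ₀I − A)⁻¹`. Since `(conj σ₀ I − A*)⁻¹ = R*`, the quadratic form of `μ` is
`⟨v, μ v⟩ = (w − conj w) / (2πi) = Im w / π` with `w = τ ⟨v, R v⟩`. Writing `v = (σ₀I − A) u`
gives `w = τ · conj ⟨u, (σ₀I − A) u⟩ = ‖u‖² τ (conj σ₀ − conj ⟨u', A u'⟩)` for the unit vector
`u' = u / ‖u‖`, whose imaginary part is nonnegative by the hypothesis on the numerical range.
-/

variable {H : Type*} [NormedAddCommGroup H] [InnerProductSpace ℂ H] [CompleteSpace H]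

/-- The double layer potential kernel
`μ(σ, τ; A) = (1/(2πi)) (τ (σI − A)⁻¹ − conj(τ) (conj(σ)I − A*)⁻¹)`,
where `τ` plays the role of the unit tangent. -/
noncomputable def dlpKernel (A : H →L[ℂ] H) (σ τ : ℂ) : H →L[ℂ] H :=
  (2 * (Real.pi : ℂ) * Complex.I)⁻¹ •
    (τ • Ring.inverse (σ • (1 : H →L[ℂ] H) - A) -
      (starRingEnd ℂ τ) • Ring.inverse
        ((starRingEnd ℂ σ) • (1 : H →L[ℂ] H) - ContinuousLinearMap.adjoint A))

open ComplexConjugate ContinuousLinearMap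

theorem im_mul_conj_inner_apply_self_nonneg {E : Type*} [NormedAddCommGroup E]
    [InnerProductSpace ℂ E] {T : E →L[ℂ] E} {τ : ℂ}
    (h : ∀ u : E, ‖u‖ = 1 → 0 ≤ (τ * conj (inner ℂ u (T u))).im) (u : E) :
    0 ≤ (τ * conj (inner ℂ u (T u))).im := by
  rcases eq_or_ne u 0 with rfl | hu
  · simp
  have hnorm : (‖u‖ : ℂ) ≠ 0 := by exact_mod_cast norm_ne_zero_iff.mpr hu
  set u₁ : E := (‖u‖⁻¹ : ℂ) • u
  have hu₁ : ‖u₁‖ = 1 := by simp [u₁, norm_smul, hu]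
  have hscale : inner ℂ u (T u) = ((‖u‖ ^ 2 : ℝ) : ℂ) * inner ℂ u₁ (T u₁) := by
    simp only [u₁, map_smul, inner_smul_left, inner_smul_right, map_inv₀, Complex.conj_ofReal]
    push_cast
    field_simp
  have hscale_im :
      (τ * conj (inner ℂ u (T u))).im = ‖u‖ ^ 2 * (τ * conj (inner ℂ u₁ (T u₁))).im := by
    rw [hscale, map_mul, Complex.conj_ofReal, mul_left_comm, Complex.im_ofReal_mul]
  rw [hscale_im]
  exact mul_nonneg (sq_nonneg _) (h u₁ hu₁)

theorem inner_apply_ring_inverse_apply {E : Type*} [NormedAddCommGroup E]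
    [InnerProductSpace ℂ E] {B : E →L[ℂ] E} (hB : IsUnit B) (v : E) :
    inner ℂ v (Ring.inverse B v) = conj (inner ℂ (Ring.inverse B v) (B (Ring.inverse B v))) := by
  have hv : B (Ring.inverse B v) = v := by
    rw [← mul_apply_eq_comp, Ring.mul_inverse_cancel B hB, one_apply_eq_self]
  rw [hv, inner_conj_symm]

theorem inner_smul_sub_conj_smul_adjoint_apply_self (R : H →L[ℂ] H) (τ : ℂ) (v : H) :
    inner ℂ v ((τ • R - conj τ • adjoint R) v) =
      ((2 * (τ * inner ℂ v (R v)).im : ℝ) : ℂ) * Complex.I := by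
  rw [← Complex.sub_conj, sub_apply, inner_sub_right, smul_apply, smul_apply, inner_smul_right,
    inner_smul_right, adjoint_inner_right, ← inner_conj_symm, map_mul, Complex.conj_conj]

theorem dlpKernel_eq (A : H →L[ℂ] H) (σ τ : ℂ) :
    dlpKernel A σ τ = (2 * (Real.pi : ℂ) * Complex.I)⁻¹ •
      (τ • Ring.inverse (σ • 1 - A) - conj τ • adjoint (Ring.inverse (σ • 1 - A))) := by
  have hstar : conj σ • (1 : H →L[ℂ] H) - adjoint A = star (σ • 1 - A) := by
    rw [star_sub, star_smul, star_one, star_eq_adjoint, Complex.star_def]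
  rw [dlpKernel, hstar, Ring.inverse_star, star_eq_adjoint]

theorem re_inner_dlpKernel_apply_self (A : H →L[ℂ] H) (σ τ : ℂ) (v : H) :
    (inner ℂ v (dlpKernel A σ τ v)).re =
      (τ * inner ℂ v (Ring.inverse (σ • 1 - A) v)).im / Real.pi := by
  rw [dlpKernel_eq, smul_apply, inner_smul_right, inner_smul_sub_conj_smul_adjoint_apply_self]
  generalize (τ * inner ℂ v (Ring.inverse (σ • 1 - A) v)).im = x
  have hπ : (Real.pi : ℂ) ≠ 0 := by exact_mod_cast Real.pi_ne_zero
  rw [show (2 * (Real.pi : ℂ) * Complex.I)⁻¹ * (((2 * x : ℝ) : ℂ) * Complex.I) =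
    ((x / Real.pi : ℝ) : ℂ) by push_cast; field_simp, Complex.ofReal_re]

theorem dlpKernel_nonneg_of_numericalRange_subset_halfplane_general
    (A : H →L[ℂ] H) (σ₀ τ : ℂ)
    (hinv : IsUnit (σ₀ • (1 : H →L[ℂ] H) - A))
    (hW : ∀ u : H, ‖u‖ = 1 →
      0 ≤ (τ * (starRingEnd ℂ σ₀ - starRingEnd ℂ (inner ℂ u (A u) : ℂ))).im) :
    ∀ v : H, 0 ≤ (inner ℂ v (dlpKernel A σ₀ τ v) : ℂ).re := by
  intro v
  rw [re_inner_dlpKernel_apply_self, inner_apply_ring_inverse_apply hinv]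
  refine div_nonneg (im_mul_conj_inner_apply_self_nonneg (fun u hu => ?_) _) Real.pi_pos.le
  have hunit : inner ℂ u (σ₀ • u - A u) = σ₀ - inner ℂ u (A u) := by
    rw [inner_sub_right, inner_smul_right, inner_self_eq_norm_sq_to_K, hu, RCLike.ofReal_one,
      one_pow, mul_one]
  rw [sub_apply, smul_apply, one_apply_eq_self, hunit, map_sub]
  exact hW u hu

/-- **Lemma 4, first part.** If the numerical range of `A` lies in the half
plane `Π₀ = {z : Im(τ(conj σ₀ − conj z)) ≥ 0}`, `|τ| = 1` and `σ₀ I − A` is invertible, then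
the self-adjoint operator `μ(σ₀, τ; A)` is positive semidefinite. -/
theorem dlpKernel_nonneg_of_numericalRange_subset_halfplane
    (A : H →L[ℂ] H) (σ₀ τ : ℂ) (hτ : ‖τ‖ = 1)
    (hinv : IsUnit (σ₀ • (1 : H →L[ℂ] H) - A))
    (hW : ∀ u : H, ‖u‖ = 1 →
      0 ≤ (τ * (starRingEnd ℂ σ₀ - starRingEnd ℂ (inner ℂ u (A u) : ℂ))).im) :
    ∀ v : H, 0 ≤ (inner ℂ v (dlpKernel A σ₀ τ v) : ℂ).re :=
  dlpKernel_nonneg_of_numericalRange_subset_halfplane_general A σ₀ τ hinv hW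
end

section
/- Let A be a bounded linear operator on a complex Hilbert space H, let σ₀ ∈ ℂ be such that σ₀I − A is invertible, and let τ ∈ ℂ with |τ| = 1. Assume Im(τ(conj(σ₀) − conj(⟨Au, u⟩))) ≥ 0 for every unit vector u ∈ H, and assume moreover that σ₀ belongs to the numerical range: σ₀ = ⟨Au₀, u₀⟩ for some unit vector u₀ ∈ H. Then the smallest spectral value of the self-adjoint operator μ(σ₀, τ; A) := (1/(2πi)) ( τ (σ₀I − A)⁻¹ − conj(τ) (conj(σ₀)I − A*)⁻¹ ) is zero: Re⟨μ(σ₀, τ; A) v, v⟩ ≥ 0 for every v ∈ H, and there exists a nonzero vector v₀ ∈ H (namely v₀ = (σ₀I − A)u₀) with ⟨μ(σ₀, τ; A) v₀, v₀⟩ = 0. -/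
variable {H : Type*} [NormedAddCommGroup H] [InnerProductSpace ℂ H] [CompleteSpace H]

/-! With `R = (σ₀I − A)⁻¹`, the quadratic form of `μ(σ₀, τ; A)` is `⟨v, μv⟩ = Im(τ⟨v, Rv⟩)/π`.
Writing `v = (σ₀I − A)u` gives `⟨v, Rv⟩ = conj⟨u, (σ₀I − A)u⟩ = ‖u‖² (conj σ₀ − conj⟨w, Aw⟩)`
with `w = u/‖u‖`, so the half-plane condition on `W(A)` makes the form nonnegative, and it
vanishes at `u = u₀` because `σ₀ = ⟨Au₀, u₀⟩`. -/

open ComplexConjugate ContinuousLinearMap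
open scoped InnerProductSpace

section

variable {E : Type*} [NormedAddCommGroup E] [InnerProductSpace ℂ E]

theorem inner_ofReal_smul_apply_ofReal_smul (T : E →L[ℂ] E) (r : ℝ) (u : E) :
    ⟪(r : ℂ) • u, T ((r : ℂ) • u)⟫_ℂ = ((r ^ 2 : ℝ) : ℂ) * ⟪u, T u⟫_ℂ := by
  rw [map_smul, inner_smul_left, inner_smul_right, Complex.conj_ofReal]
  push_cast
  ring

theorem im_mul_conj_inner_apply_self_nonneg_of_norm_eq_one {T : E →L[ℂ] E} {τ : ℂ}
    (hT : ∀ u : E, ‖u‖ = 1 → 0 ≤ (τ * conj ⟪u, T u⟫_ℂ).im) (u : E) :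
    0 ≤ (τ * conj ⟪u, T u⟫_ℂ).im := by
  rcases eq_or_ne u 0 with rfl | hu
  · simp
  have hnorm : ‖u‖ ≠ 0 := norm_ne_zero_iff.mpr hu
  set w : E := ((‖u‖⁻¹ : ℝ) : ℂ) • u
  have hw : ‖w‖ = 1 := by
    rw [norm_smul, Complex.norm_real, Real.norm_of_nonneg (by positivity), inv_mul_cancel₀ hnorm]
  have hu_eq : u = ((‖u‖ : ℝ) : ℂ) • w := by
    rw [smul_smul, ← Complex.ofReal_mul, mul_inv_cancel₀ hnorm, Complex.ofReal_one, one_smul]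
  rw [hu_eq, inner_ofReal_smul_apply_ofReal_smul, map_mul, Complex.conj_ofReal, mul_left_comm,
    Complex.im_ofReal_mul]
  exact mul_nonneg (sq_nonneg _) (hT w hw)

theorem inner_smul_one_sub_apply_self (A : E →L[ℂ] E) (σ : ℂ) (u : E) :
    ⟪u, (σ • (1 : E →L[ℂ] E) - A) u⟫_ℂ = σ * (‖u‖ : ℂ) ^ 2 - ⟪u, A u⟫_ℂ := by
  simp [inner_self_eq_norm_sq_to_K]

end

theorem inner_smul_sub_smul_star_apply_self (C : H →L[ℂ] H) (τ : ℂ) (v : H) :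
    ⟪v, (τ • C - conj τ • star C) v⟫_ℂ = (2 * (τ * ⟪v, C v⟫_ℂ).im : ℝ) * Complex.I := by
  rw [← Complex.sub_conj, star_eq_adjoint]
  simp only [sub_apply, smul_apply, inner_sub_right, inner_smul_right, adjoint_inner_right,
    map_mul, inner_conj_symm]

theorem inner_dlpKernel_apply_self (A : H →L[ℂ] H) (σ τ : ℂ) (v : H) :
    ⟪v, dlpKernel A σ τ v⟫_ℂ =
      ((τ * ⟪v, Ring.inverse (σ • (1 : H →L[ℂ] H) - A) v⟫_ℂ).im / Real.pi : ℝ) := by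
  have hstar : conj σ • (1 : H →L[ℂ] H) - adjoint A = star (σ • (1 : H →L[ℂ] H) - A) := by
    simp [star_sub, star_smul, star_eq_adjoint]
  rw [dlpKernel, hstar, Ring.inverse_star, smul_apply, inner_smul_right,
    inner_smul_sub_smul_star_apply_self]
  have hπ : (Real.pi : ℂ) ≠ 0 := by exact_mod_cast Real.pi_ne_zero
  push_cast
  field_simp [Complex.I_ne_zero]

theorem inner_dlpKernel_smul_one_sub_apply (A : H →L[ℂ] H) {σ : ℂ} (τ : ℂ)
    (hinv : IsUnit (σ • (1 : H →L[ℂ] H) - A)) (u : H) :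
    ⟪(σ • (1 : H →L[ℂ] H) - A) u, dlpKernel A σ τ ((σ • (1 : H →L[ℂ] H) - A) u)⟫_ℂ =
      ((τ * conj ⟪u, (σ • (1 : H →L[ℂ] H) - A) u⟫_ℂ).im / Real.pi : ℝ) := by
  rw [inner_dlpKernel_apply_self, ← mul_apply_eq_comp, Ring.inverse_mul_cancel _ hinv,
    one_apply_eq_self, inner_conj_symm]

theorem dlpKernel_min_eq_zero_of_mem_numericalRange_general
    (A : H →L[ℂ] H) (σ₀ τ : ℂ)
    (hinv : IsUnit (σ₀ • (1 : H →L[ℂ] H) - A))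
    (hW : ∀ u : H, ‖u‖ = 1 →
      0 ≤ (τ * (starRingEnd ℂ σ₀ - starRingEnd ℂ (inner ℂ u (A u) : ℂ))).im)
    (u₀ : H) (hu₀ : ‖u₀‖ = 1) (hσ₀ : σ₀ = (inner ℂ u₀ (A u₀) : ℂ)) :
    (∀ v : H, 0 ≤ (inner ℂ v (dlpKernel A σ₀ τ v) : ℂ).re) ∧
      ∃ v₀ : H, v₀ ≠ 0 ∧ (inner ℂ v₀ (dlpKernel A σ₀ τ v₀) : ℂ) = 0 := by
  set B : H →L[ℂ] H := σ₀ • (1 : H →L[ℂ] H) - A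
  have hB_unit : ∀ u : H, ‖u‖ = 1 → 0 ≤ (τ * conj ⟪u, B u⟫_ℂ).im := fun u hu => by
    simpa [B, inner_smul_one_sub_apply_self, hu] using hW u hu
  have hB_bij : Function.Bijective B := isUnit_iff_bijective.mp hinv
  refine ⟨fun v => ?_, B u₀, ?_, ?_⟩
  · obtain ⟨u, rfl⟩ := hB_bij.surjective v
    rw [inner_dlpKernel_smul_one_sub_apply A τ hinv, Complex.ofReal_re]
    exact div_nonneg (im_mul_conj_inner_apply_self_nonneg_of_norm_eq_one hB_unit u) Real.pi_pos.le
  · rw [Ne, ← map_zero B, hB_bij.injective.eq_iff, ← norm_eq_zero, hu₀]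
    exact one_ne_zero
  · rw [inner_dlpKernel_smul_one_sub_apply A τ hinv, inner_smul_one_sub_apply_self, hu₀,
      ← hσ₀]
    simp

/-- **Lemma 4, second part.** If the numerical range of `A` lies in the half
plane `Π₀ = {z : Im(τ(conj σ₀ − conj z)) ≥ 0}`, `|τ| = 1`, `σ₀ I − A` is invertible and
moreover `σ₀ = ⟨A u₀, u₀⟩` belongs to the numerical range, then `μ(σ₀, τ; A) ≥ 0` and its
smallest spectral value is `0`: the quadratic form vanishes at the nonzero vector
`v₀ = (σ₀ I − A) u₀`. -/
theorem dlpKernel_min_eq_zero_of_mem_numericalRange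
    (A : H →L[ℂ] H) (σ₀ τ : ℂ) (hτ : ‖τ‖ = 1)
    (hinv : IsUnit (σ₀ • (1 : H →L[ℂ] H) - A))
    (hW : ∀ u : H, ‖u‖ = 1 →
      0 ≤ (τ * (starRingEnd ℂ σ₀ - starRingEnd ℂ (inner ℂ u (A u) : ℂ))).im)
    (u₀ : H) (hu₀ : ‖u₀‖ = 1) (hσ₀ : σ₀ = (inner ℂ u₀ (A u₀) : ℂ)) :
    (∀ v : H, 0 ≤ (inner ℂ v (dlpKernel A σ₀ τ v) : ℂ).re) ∧
      ∃ v₀ : H, v₀ ≠ 0 ∧ (inner ℂ v₀ (dlpKernel A σ₀ τ v₀) : ℂ) = 0 :=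
  dlpKernel_min_eq_zero_of_mem_numericalRange_general A σ₀ τ hinv hW u₀ hu₀ hσ₀
end

section
/- Let A be a bounded linear operator on a complex Hilbert space H, let ω ∈ ℂ, R > 0, θ ∈ ℝ, and set σ₀ = ω + R e^{iθ} and τ = i e^{iθ}. Assume ‖A − ωI‖ ≤ R and that σ₀I − A is invertible. Then for every v ∈ H, Re⟨μ(σ₀, τ; A) v, v⟩ ≥ ‖v‖² / (2πR); in other words, λ_min(μ(σ₀, τ; A)) ≥ 1/(2πR). -/
variable {H : Type*} [NormedAddCommGroup H] [InnerProductSpace ℂ H] [CompleteSpace H]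

/-!
Put `e = e^{iθ}` and `w = (σ₀ − A)⁻¹ v`. The quadratic form of the kernel is `Im(τ⟪v, w⟫)/π`,
since its two terms are complex conjugates of each other. Multiplying by `conj e` turns `σ₀ − A`
into `R − K` with `‖K‖ = ‖A − ω‖ ≤ R`, and `Im(τ⟪v, w⟫)` into `Re⟪(R − K)w, w⟫`. Expanding
`‖Rw − (R − K)w‖² = ‖Kw‖² ≤ R²‖w‖²` gives `‖(R − K)w‖² ≤ 2R Re⟪(R − K)w, w⟫`, while
`‖(R − K)w‖ = ‖v‖`.
-/

open ComplexConjugate RCLike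

section Accretive

variable {𝕜 E : Type*} [RCLike 𝕜] [NormedAddCommGroup E] [InnerProductSpace 𝕜 E]

theorem norm_sq_le_two_mul_re_inner_of_norm_smul_sub_le {x w : E} {R : ℝ}
    (h : ‖(R : 𝕜) • w - x‖ ≤ R * ‖w‖) : ‖x‖ ^ 2 ≤ 2 * R * re (inner 𝕜 x w) := by
  have hsq : ‖(R : 𝕜) • w - x‖ ^ 2 ≤ (R * ‖w‖) ^ 2 := pow_le_pow_left₀ (norm_nonneg _) h 2
  rw [norm_sub_sq (𝕜 := 𝕜), inner_smul_real_left, real_smul_eq_coe_mul, re_ofReal_mul,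
    inner_re_symm, norm_smul, norm_ofReal, mul_pow, sq_abs] at hsq
  linarith

theorem ContinuousLinearMap.norm_sq_apply_le_two_mul_re_inner_of_norm_le {K : E →L[𝕜] E}
    {R : ℝ} (hK : ‖K‖ ≤ R) (w : E) :
    ‖((R : 𝕜) • 1 - K) w‖ ^ 2 ≤ 2 * R * re (inner 𝕜 (((R : 𝕜) • 1 - K) w) w) := by
  refine norm_sq_le_two_mul_re_inner_of_norm_smul_sub_le ?_
  calc ‖(R : 𝕜) • w - ((R : 𝕜) • 1 - K) w‖ = ‖K w‖ := by simp
    _ ≤ ‖K‖ * ‖w‖ := K.le_opNorm w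
    _ ≤ R * ‖w‖ := by gcongr

end Accretive

theorem re_inner_dlpKernel (A : H →L[ℂ] H) (σ τ : ℂ) (v : H) :
    (inner ℂ v (dlpKernel A σ τ v)).re =
      (τ * inner ℂ v (Ring.inverse (σ • (1 : H →L[ℂ] H) - A) v)).im / Real.pi := by
  set X := Ring.inverse (σ • (1 : H →L[ℂ] H) - A)
  set z := τ * inner ℂ v (X v) with hz
  have hstar : conj σ • (1 : H →L[ℂ] H) - ContinuousLinearMap.adjoint A
      = star (σ • 1 - A) := by
    simp [star_sub, star_smul, ContinuousLinearMap.star_eq_adjoint]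
  have hinner : inner ℂ v (dlpKernel A σ τ v) =
      (2 * (Real.pi : ℂ) * Complex.I)⁻¹ * (z - conj z) := by
    rw [dlpKernel, hstar, Ring.inverse_star, ContinuousLinearMap.star_eq_adjoint]
    simp only [smul_apply, sub_apply, inner_smul_right, inner_sub_right,
      ContinuousLinearMap.adjoint_inner_right]
    rw [← inner_conj_symm (X v) v, hz, map_mul]
  have hπ : (Real.pi : ℂ) ≠ 0 := by exact_mod_cast Real.pi_ne_zero
  have hreal :
      (2 * (Real.pi : ℂ) * Complex.I)⁻¹ * (z - conj z) = ((z.im / Real.pi : ℝ) : ℂ) := by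
    rw [Complex.sub_conj]
    push_cast
    field_simp
  rw [hinner, hreal, Complex.ofReal_re]

/-- **Lemma 5.** If `‖A − ωI‖ ≤ R`, `σ₀ = ω + R e^{iθ}` is on the circle of
center `ω` and radius `R`, `τ = i e^{iθ}` is the counterclockwise unit tangent there, and
`σ₀ I − A` is invertible, then `λ_min(μ(σ₀, τ; A)) ≥ 1/(2πR)`. -/
theorem dlpKernel_lambda_min_ge_of_norm_le
    (A : H →L[ℂ] H) (ω : ℂ) (R : ℝ) (hR : 0 < R) (θ : ℝ)
    (σ₀ τ : ℂ) (hσ₀ : σ₀ = ω + R * Complex.exp (θ * Complex.I))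
    (hτ : τ = Complex.I * Complex.exp (θ * Complex.I))
    (hA : ‖A - ω • (1 : H →L[ℂ] H)‖ ≤ R)
    (hinv : IsUnit (σ₀ • (1 : H →L[ℂ] H) - A)) :
    ∀ v : H, ‖v‖ ^ 2 / (2 * Real.pi * R) ≤ (inner ℂ v (dlpKernel A σ₀ τ v) : ℂ).re := by
  intro v
  set e := Complex.exp (θ * Complex.I)
  have he : ‖e‖ = 1 := Complex.norm_exp_ofReal_mul_I θ
  set B := σ₀ • (1 : H →L[ℂ] H) - A
  set K := conj e • (A - ω • (1 : H →L[ℂ] H))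
  set w := Ring.inverse B v with hw
  have hv : B w = v := by
    rw [hw, ← mul_apply_eq_comp, Ring.mul_inverse_cancel B hinv, one_apply_eq_self]
  have hrot : conj e • B = (R : ℂ) • 1 - K := by
    have hee : conj e * e = 1 := by
      rw [Complex.conj_mul', he, Complex.ofReal_one, one_pow]
    simp only [B, K, hσ₀]
    linear_combination (norm := module) ((R : ℂ) * hee) • (1 : H →L[ℂ] H)
  have hK : ‖K‖ ≤ R := by
    rwa [norm_smul, Complex.norm_conj, he, one_mul]
  have hnorm : ‖((R : ℂ) • 1 - K) w‖ = ‖v‖ := by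
    rw [← hrot, smul_apply, norm_smul, hv, Complex.norm_conj, he, one_mul]
  have hre : re (inner ℂ (((R : ℂ) • 1 - K) w) w) = (τ * inner ℂ v w).im := by
    rw [← hrot, smul_apply, inner_smul_left, hv, hτ, Complex.conj_conj, mul_assoc,
      Complex.I_mul_im, re_to_complex]
  have key : ‖((R : ℂ) • 1 - K) w‖ ^ 2 ≤ 2 * R * re (inner ℂ (((R : ℂ) • 1 - K) w) w) :=
    K.norm_sq_apply_le_two_mul_re_inner_of_norm_le hK w
  rw [hnorm, hre] at key
  rw [re_inner_dlpKernel, div_le_div_iff₀ (by positivity) Real.pi_pos]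
  linarith [mul_le_mul_of_nonneg_right key Real.pi_pos.le]
end

section
/- Let A be a bounded linear operator on a complex Hilbert space H, let ω ∈ ℂ, R > 0, θ ∈ ℝ, and set σ₀ = ω + (1/R) e^{−iθ} and τ = −i e^{−iθ} (so that σ₀ − ω = iτ/R). Assume that A − ωI is invertible, that its inverse has numerical radius at most R, i.e. |⟨(A − ωI)⁻¹ u, u⟩| ≤ R for every unit vector u ∈ H, and that σ₀I − A is invertible. Then for every v ∈ H, Re⟨μ(σ₀, τ; A) v, v⟩ ≥ −(R/π) ‖v‖²; in other words, λ_min(μ(σ₀, τ; A)) ≥ −R/π. -/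
variable {H : Type*} [NormedAddCommGroup H] [InnerProductSpace ℂ H] [CompleteSpace H]

/-! With `u = (σ₀ − A)⁻¹ v`, `w = (A − ω) u` and `s = σ₀ − ω` we have `u = B w` and `v = s u − w`.
Since `(σ₀ − A)⁻* = ((σ₀ − A)⁻¹)*`, `⟨v, μ v⟩ = Im (τ ⟨v, u⟩) / π`, and `τ = −i R s` turns this into
`−R Re ⟨v, s u⟩ / π`. So the bound says `Re ⟨v, s u⟩ ≤ ‖v‖²`, i.e. `Re ⟨s u, w⟩ ≤ ‖w‖²`, which follows
from `|s| = 1/R` and `|⟨w, B w⟩| ≤ R ‖w‖²`. -/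

open ComplexConjugate

theorem norm_inner_apply_le_of_forall_norm_eq_one {𝕜 E : Type*} [RCLike 𝕜] [NormedAddCommGroup E]
    [InnerProductSpace 𝕜 E] {B : E →ₗ[𝕜] E} {R : ℝ}
    (hB : ∀ u : E, ‖u‖ = 1 → ‖(inner 𝕜 u (B u) : 𝕜)‖ ≤ R) (x : E) :
    ‖(inner 𝕜 x (B x) : 𝕜)‖ ≤ R * ‖x‖ ^ 2 := by
  rcases eq_or_ne x 0 with rfl | hx
  · simp
  have hx' : 0 < ‖x‖ := norm_pos_iff.mpr hx
  have hunit := hB ((‖x‖⁻¹ : 𝕜) • x) (by simp [norm_smul, hx'.ne'])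
  rw [map_smul, inner_smul_left, inner_smul_right, norm_mul, norm_mul] at hunit
  simp only [RCLike.norm_conj, norm_inv, RCLike.norm_ofReal, abs_norm] at hunit
  calc ‖(inner 𝕜 x (B x) : 𝕜)‖ = ‖x‖ ^ 2 * (‖x‖⁻¹ * (‖x‖⁻¹ * ‖(inner 𝕜 x (B x) : 𝕜)‖)) := by
        field_simp
    _ ≤ R * ‖x‖ ^ 2 := by nlinarith [sq_nonneg ‖x‖]

theorem re_inner_smul_apply_le_norm_sq {E : Type*} [NormedAddCommGroup E]
    [InnerProductSpace ℂ E] {B : E →ₗ[ℂ] E} {R : ℝ}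
    (hB : ∀ x : E, ‖(inner ℂ x (B x) : ℂ)‖ ≤ R * ‖x‖ ^ 2) {s : ℂ} (hs : ‖s‖ * R ≤ 1) (w : E) :
    (inner ℂ (s • B w - w) (s • B w) : ℂ).re ≤ ‖s • B w - w‖ ^ 2 := by
  set v := s • B w - w
  have hself (x : E) : (inner ℂ x x : ℂ).re = ‖x‖ ^ 2 := inner_self_eq_norm_sq (𝕜 := ℂ) x
  have hgap : ‖v‖ ^ 2 - (inner ℂ v (s • B w) : ℂ).re = ‖w‖ ^ 2 - (inner ℂ (s • B w) w : ℂ).re :=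
    calc ‖v‖ ^ 2 - (inner ℂ v (s • B w) : ℂ).re = (inner ℂ v (v - s • B w) : ℂ).re := by
          rw [inner_sub_right, Complex.sub_re, hself]
      _ = ‖w‖ ^ 2 - (inner ℂ (s • B w) w : ℂ).re := by
          rw [sub_sub_cancel_left, inner_neg_right, inner_sub_left, Complex.neg_re, Complex.sub_re,
            hself]
          ring
  have hcross : (inner ℂ (s • B w) w : ℂ).re ≤ ‖w‖ ^ 2 :=
    calc (inner ℂ (s • B w) w : ℂ).re ≤ ‖(inner ℂ (s • B w) w : ℂ)‖ := Complex.re_le_norm _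
      _ = ‖s‖ * ‖(inner ℂ w (B w) : ℂ)‖ := by
          rw [inner_smul_left, norm_mul, Complex.norm_conj, norm_inner_symm]
      _ ≤ ‖s‖ * (R * ‖w‖ ^ 2) := by gcongr; exact hB w
      _ ≤ ‖w‖ ^ 2 := by nlinarith [sq_nonneg ‖w‖]
  linarith

theorem re_inner_dlpKernel_apply (A : H →L[ℂ] H) (σ τ : ℂ) (v : H) :
    (inner ℂ v (dlpKernel A σ τ v) : ℂ).re =
      (τ * inner ℂ v (Ring.inverse (σ • (1 : H →L[ℂ] H) - A) v)).im / Real.pi := by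
  have hstar : conj σ • (1 : H →L[ℂ] H) - ContinuousLinearMap.adjoint A = star (σ • 1 - A) := by
    rw [star_sub, star_smul, star_one, ContinuousLinearMap.star_eq_adjoint, starRingEnd_apply]
  rw [dlpKernel, hstar, Ring.inverse_star]
  set z : ℂ := τ * inner ℂ v (Ring.inverse (σ • (1 : H →L[ℂ] H) - A) v)
  have hconj : conj τ * inner ℂ v (star (Ring.inverse (σ • (1 : H →L[ℂ] H) - A)) v) = conj z := by
    rw [ContinuousLinearMap.star_eq_adjoint, ContinuousLinearMap.adjoint_inner_right,
      ← inner_conj_symm, ← map_mul]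
  simp only [smul_apply, sub_apply, inner_smul_right, inner_sub_right]
  have hπ : (Real.pi : ℂ) ≠ 0 := Complex.ofReal_ne_zero.mpr Real.pi_ne_zero
  rw [hconj, Complex.sub_conj, show (2 * (Real.pi : ℂ) * Complex.I)⁻¹ * ((2 * z.im : ℝ) * Complex.I)
    = ((z.im / Real.pi : ℝ) : ℂ) by push_cast; field_simp, Complex.ofReal_re]

theorem dlpKernel_lambda_min_ge_of_inverse_numericalRadius_le_general
    (A B : H →L[ℂ] H) (ω : ℂ) (R : ℝ) (hR : 0 < R) (θ : ℝ)
    (σ₀ τ : ℂ) (hσ₀ : σ₀ = ω + (1 / R : ℝ) * Complex.exp (-θ * Complex.I))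
    (hτ : τ = -Complex.I * Complex.exp (-θ * Complex.I))
    (hBA : B * (A - ω • (1 : H →L[ℂ] H)) = 1)
    (hB : ∀ u : H, ‖u‖ = 1 → ‖(inner ℂ u (B u) : ℂ)‖ ≤ R)
    (hinv : IsUnit (σ₀ • (1 : H →L[ℂ] H) - A)) :
    ∀ v : H, -(R / Real.pi) * ‖v‖ ^ 2 ≤ (inner ℂ v (dlpKernel A σ₀ τ v) : ℂ).re := by
  intro v
  set s : ℂ := (1 / R : ℝ) * Complex.exp (-θ * Complex.I)
  set u := Ring.inverse (σ₀ • (1 : H →L[ℂ] H) - A) v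
  set w := (A - ω • (1 : H →L[ℂ] H)) u
  have hBw : B w = u := by
    simpa only [mul_apply_eq_comp, one_apply_eq_self] using congr($hBA u)
  have hv : s • B w - w = v := by
    have hCu : (σ₀ • (1 : H →L[ℂ] H) - A) u = v := by
      simpa using congr($(Ring.mul_inverse_cancel _ hinv) v)
    rw [hBw, ← hCu, hσ₀]
    simp only [w, sub_apply, smul_apply, add_apply, one_apply_eq_self, add_smul]
    abel
  have hs : ‖s‖ * R ≤ 1 := by
    simp [s, Complex.norm_exp, abs_of_pos hR, hR.ne']
  have hτs : τ = -(Complex.I * R) * s := by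
    simp only [hτ, s]
    have hR' : (R : ℂ) ≠ 0 := Complex.ofReal_ne_zero.mpr hR.ne'
    push_cast
    field_simp
  have hcross := re_inner_smul_apply_le_norm_sq (B := B.toLinearMap)
    (norm_inner_apply_le_of_forall_norm_eq_one hB) hs w
  rw [ContinuousLinearMap.coe_coe, hv, hBw] at hcross
  have him : (τ * inner ℂ v u).im = -R * (inner ℂ v (s • u) : ℂ).re := by
    rw [hτs, inner_smul_right, neg_mul, neg_mul, Complex.neg_im, mul_assoc, mul_assoc, Complex.I_mul_im,
      Complex.re_ofReal_mul, neg_mul]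
  rw [re_inner_dlpKernel_apply, him]
  calc -(R / Real.pi) * ‖v‖ ^ 2 = -(R * ‖v‖ ^ 2) / Real.pi := by ring
    _ ≤ -R * (inner ℂ v (s • u) : ℂ).re / Real.pi := by gcongr; nlinarith

/-- **Lemma 7.** If `A − ωI` is invertible and its inverse has numerical radius at most `R`,
`σ₀ = ω + (1/R) e^{−iθ}` lies on the circle of center `ω` and radius `1/R`,
`τ = −i e^{−iθ}` (so `σ₀ − ω = iτ/R`), and `σ₀ I − A` is invertible, then
`λ_min(μ(σ₀, τ; A)) ≥ −R/π`. -/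
theorem dlpKernel_lambda_min_ge_of_inverse_numericalRadius_le
    (A B : H →L[ℂ] H) (ω : ℂ) (R : ℝ) (hR : 0 < R) (θ : ℝ)
    (σ₀ τ : ℂ) (hσ₀ : σ₀ = ω + (1 / R : ℝ) * Complex.exp (-θ * Complex.I))
    (hτ : τ = -Complex.I * Complex.exp (-θ * Complex.I))
    (hAB : (A - ω • (1 : H →L[ℂ] H)) * B = 1) (hBA : B * (A - ω • (1 : H →L[ℂ] H)) = 1)
    (hB : ∀ u : H, ‖u‖ = 1 → ‖(inner ℂ u (B u) : ℂ)‖ ≤ R)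
    (hinv : IsUnit (σ₀ • (1 : H →L[ℂ] H) - A)) :
    ∀ v : H, -(R / Real.pi) * ‖v‖ ^ 2 ≤ (inner ℂ v (dlpKernel A σ₀ τ v) : ℂ).re :=
  dlpKernel_lambda_min_ge_of_inverse_numericalRadius_le_general A B ω R hR θ σ₀ τ hσ₀ hτ hBA hB hinv
end

section
/- Let 0 < r < R and let σ₀ ∈ ℂ with |σ₀| = R. Then (1/π) ∫₀^{2π} | Im( i r e^{iθ} / (r e^{iθ} − σ₀) ) | dθ = (4/π) · arcsin(r/R). -/
/-!
Writing `σ₀ = R e^{iφ}` and `z = r e^{iθ}`, the integrand is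
`Re (z / (z - σ₀)) = (r² - rR cos(θ - φ)) / |z - σ₀|²`, the derivative of the argument of
`z - σ₀`; by periodicity we may take `φ = 0`. Since `r < R`, the point `z - R` stays in the left
half-plane, so this argument is `arctan (r sin θ / (r cos θ - R))` up to a constant. The kernel is
`≤ 0` exactly where `cos θ ≥ r / R`, i.e. on `|θ| ≤ θ₀ := arccos (r / R)`, so over the period
`[-θ₀, 2π - θ₀]` the integral of its absolute value is `-4 arctan (r sin θ₀ / (r cos θ₀ - R))`,
which is `4 arcsin (r / R)`.
-/

open Real Set intervalIntegral

theorem integral_abs_eq_of_hasDerivAt_of_nonpos_of_nonneg {f F : ℝ → ℝ} {a b c : ℝ}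
    (hac : a ≤ c) (hcb : c ≤ b) (hF : ∀ t ∈ Icc a b, HasDerivAt F (f t) t)
    (hf : IntervalIntegrable f MeasureTheory.volume a b)
    (hnonpos : ∀ t ∈ Icc a c, f t ≤ 0) (hnonneg : ∀ t ∈ Icc c b, 0 ≤ f t) :
    ∫ t in a..b, |f t| = F a + F b - 2 * F c := by
  have hab := hac.trans hcb
  have hf_ac : IntervalIntegrable f MeasureTheory.volume a c :=
    hf.mono_set (by rw [uIcc_of_le hac, uIcc_of_le hab]; exact Icc_subset_Icc_right hcb)
  have hf_cb : IntervalIntegrable f MeasureTheory.volume c b :=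
    hf.mono_set (by rw [uIcc_of_le hcb, uIcc_of_le hab]; exact Icc_subset_Icc_left hac)
  have h_ac : ∫ t in a..c, |f t| = -(F c - F a) := by
    rw [← integral_eq_sub_of_hasDerivAt (fun t ht => hF t ?_) hf_ac, ← integral_neg]
    · refine integral_congr fun t ht => abs_of_nonpos (hnonpos t ?_)
      rwa [uIcc_of_le hac] at ht
    · rw [uIcc_of_le hac] at ht; exact ⟨ht.1, ht.2.trans hcb⟩
  have h_cb : ∫ t in c..b, |f t| = F b - F c := by
    rw [← integral_eq_sub_of_hasDerivAt (fun t ht => hF t ?_) hf_cb]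
    · refine integral_congr fun t ht => abs_of_nonneg (hnonneg t ?_)
      rwa [uIcc_of_le hcb] at ht
    · rw [uIcc_of_le hcb] at ht; exact ⟨hac.trans ht.1, ht.2⟩
  rw [← integral_add_adjacent_intervals hf_ac.abs hf_cb.abs, h_ac, h_cb]
  ring

namespace DLPKernel

noncomputable def kernel (r R t : ℝ) : ℝ :=
  (r ^ 2 - r * R * cos t) / (r ^ 2 + R ^ 2 - 2 * r * R * cos t)

noncomputable def primitive (r R t : ℝ) : ℝ :=
  arctan (r * sin t / (r * cos t - R))

theorem im_I_mul_div_sub_eq_kernel (r R θ φ : ℝ) :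
    (Complex.I * (r * Complex.exp (θ * Complex.I)) /
      (r * Complex.exp (θ * Complex.I) - R * Complex.exp (φ * Complex.I))).im =
      kernel r R (θ - φ) := by
  have hs := sin_sq_add_cos_sq θ
  have hs' := sin_sq_add_cos_sq φ
  simp only [Complex.div_im, Complex.normSq_apply, Complex.mul_im, Complex.mul_re, Complex.sub_re,
    Complex.sub_im, Complex.I_re, Complex.I_im, Complex.ofReal_re, Complex.ofReal_im,
    Complex.exp_ofReal_mul_I_re, Complex.exp_ofReal_mul_I_im, kernel, cos_sub]
  rw [div_sub_div_same]
  congr 1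
  · ring_nf; linear_combination r ^ 2 * hs
  · ring_nf; linear_combination r ^ 2 * hs + R ^ 2 * hs'

variable {r R : ℝ}

theorem kernel_periodic : Function.Periodic (kernel r R) (2 * π) := by
  intro t; simp only [kernel, cos_add_two_pi]

theorem primitive_periodic : Function.Periodic (primitive r R) (2 * π) := by
  intro t; simp only [primitive, sin_add_two_pi, cos_add_two_pi]

theorem primitive_neg (t : ℝ) : primitive r R (-t) = -primitive r R t := by
  simp only [primitive, sin_neg, cos_neg, mul_neg, neg_div, arctan_neg]

theorem div_mem_Ioo_neg_one_one (hr : 0 < r) (hrR : r < R) : r / R ∈ Ioo (-1) 1 :=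
  ⟨by linarith [div_pos hr (hr.trans hrR)], (div_lt_one (hr.trans hrR)).2 hrR⟩

theorem kernel_denom_pos (hr : 0 < r) (hrR : r < R) (t : ℝ) :
    0 < r ^ 2 + R ^ 2 - 2 * r * R * cos t := by
  nlinarith [cos_le_one t, mul_pos hr (hr.trans hrR)]

theorem hasDerivAt_primitive (hr : 0 < r) (hrR : r < R) (t : ℝ) :
    HasDerivAt (primitive r R) (kernel r R t) t := by
  have hv : r * cos t - R ≠ 0 := by nlinarith [cos_le_one t]
  have hq : HasDerivAt (fun t => r * sin t / (r * cos t - R))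
      ((r * cos t * (r * cos t - R) - r * sin t * (r * -sin t)) / (r * cos t - R) ^ 2) t :=
    ((hasDerivAt_sin t).const_mul r).div (((hasDerivAt_cos t).const_mul r).sub_const R) hv
  refine hq.arctan.congr_deriv ?_
  have h1 : 1 + (r * sin t / (r * cos t - R)) ^ 2 =
      (r ^ 2 + R ^ 2 - 2 * r * R * cos t) / (r * cos t - R) ^ 2 := by
    field_simp
    linear_combination r ^ 2 * sin_sq_add_cos_sq t
  rw [h1, kernel]
  field_simp
  congr 1
  linear_combination r * sin_sq_add_cos_sq t

theorem continuous_kernel (hr : 0 < r) (hrR : r < R) : Continuous (kernel r R) :=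
  Continuous.div (by fun_prop) (by fun_prop) fun t => (kernel_denom_pos hr hrR t).ne'

theorem kernel_nonpos (hr : 0 < r) (hrR : r < R) {t : ℝ} (h : r / R ≤ cos t) :
    kernel r R t ≤ 0 := by
  rw [div_le_iff₀ (hr.trans hrR)] at h
  exact div_nonpos_of_nonpos_of_nonneg (by nlinarith) (kernel_denom_pos hr hrR t).le

theorem kernel_nonneg (hr : 0 < r) (hrR : r < R) {t : ℝ} (h : cos t ≤ r / R) :
    0 ≤ kernel r R t := by
  rw [le_div_iff₀ (hr.trans hrR)] at h
  exact div_nonneg (by nlinarith) (kernel_denom_pos hr hrR t).le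

theorem primitive_arccos (hr : 0 < r) (hrR : r < R) :
    primitive r R (arccos (r / R)) = -arcsin (r / R) := by
  have hR := (hr.trans hrR).ne'
  have hx := div_mem_Ioo_neg_one_one hr hrR
  rw [arcsin_eq_arctan hx, ← arctan_neg, primitive, cos_arccos hx.1.le hx.2.le, sin_arccos]
  set s := √(1 - (r / R) ^ 2)
  have hs2 : s ^ 2 = 1 - (r / R) ^ 2 := sq_sqrt (by nlinarith [hx.1, hx.2])
  congr 1
  rw [show r * (r / R) - R = -(R * s ^ 2) by rw [hs2]; field_simp; ring]
  field_simp

theorem kernel_nonpos_of_abs_le (hr : 0 < r) (hrR : r < R) {t : ℝ}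
    (ht : |t| ≤ arccos (r / R)) : kernel r R t ≤ 0 := by
  refine kernel_nonpos hr hrR ?_
  have hx := div_mem_Ioo_neg_one_one hr hrR
  rw [← cos_abs t, ← cos_arccos hx.1.le hx.2.le]
  exact cos_le_cos_of_nonneg_of_le_pi (abs_nonneg t) (arccos_le_pi _) ht

theorem kernel_nonneg_of_mem_Icc (hr : 0 < r) (hrR : r < R) {t : ℝ}
    (ht : t ∈ Icc (arccos (r / R)) (2 * π - arccos (r / R))) : 0 ≤ kernel r R t := by
  refine kernel_nonneg hr hrR ?_
  have hx := div_mem_Ioo_neg_one_one hr hrR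
  rw [← cos_arccos hx.1.le hx.2.le]
  have h0 := arccos_nonneg (r / R)
  rcases le_total t π with htπ | hπt
  · exact cos_le_cos_of_nonneg_of_le_pi h0 htπ ht.1
  · rw [← cos_two_pi_sub t]
    exact cos_le_cos_of_nonneg_of_le_pi h0 (by linarith) (by linarith [ht.2])

theorem integral_abs_kernel (hr : 0 < r) (hrR : r < R) (a : ℝ) :
    ∫ t in a..a + 2 * π, |kernel r R t| = 4 * arcsin (r / R) := by
  set t₀ := arccos (r / R)
  have ht₀ : 0 ≤ t₀ := arccos_nonneg _
  have ht₀π : t₀ ≤ π := arccos_le_pi _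
  have hper : Function.Periodic (fun t => |kernel r R t|) (2 * π) :=
    kernel_periodic.comp abs
  rw [hper.intervalIntegral_add_eq a (-t₀),
    integral_abs_eq_of_hasDerivAt_of_nonpos_of_nonneg (c := t₀) (F := primitive r R)
      (by linarith) (by linarith) (fun t _ => hasDerivAt_primitive hr hrR t)
      ((continuous_kernel hr hrR).intervalIntegrable _ _)
      (fun t ht => kernel_nonpos_of_abs_le hr hrR (abs_le.2 ht))
      (fun t ht => kernel_nonneg_of_mem_Icc hr hrR ⟨ht.1, by linarith [ht.2]⟩),
    neg_add_eq_sub, primitive_periodic.sub_eq', primitive_neg, primitive_arccos hr hrR]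
  ring

end DLPKernel

/-- For `0 < r < R` and `σ₀` on the circle `|σ₀| = R`, the total variation
of the argument kernel of the circle of radius `r` seen from `σ₀` is
`(1/π) ∫₀^{2π} |Im(i r e^{iθ}/(r e^{iθ} − σ₀))| dθ = (4/π) arcsin(r/R)`. -/
theorem integral_abs_dlp_kernel_inner_circle
    (r R : ℝ) (hr : 0 < r) (hrR : r < R) (σ₀ : ℂ) (hσ₀ : ‖σ₀‖ = R) :
    (1 / Real.pi) * ∫ θ in (0:ℝ)..(2 * Real.pi),
        |(Complex.I * (r * Complex.exp (θ * Complex.I)) /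
            (r * Complex.exp (θ * Complex.I) - σ₀)).im| =
      (4 / Real.pi) * Real.arcsin (r / R) := by
  have hσ : σ₀ = R * Complex.exp (σ₀.arg * Complex.I) := by
    rw [← hσ₀, Complex.norm_mul_exp_arg_mul_I]
  rw [hσ]
  simp_rw [DLPKernel.im_I_mul_div_sub_eq_kernel]
  rw [integral_comp_sub_right (fun t => |DLPKernel.kernel r R t|), zero_sub, sub_eq_neg_add,
    DLPKernel.integral_abs_kernel hr hrR]
  ring
end
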